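/- Let m ≥ 2, let Skew(m,ℂ) = {V ∈ M_m(ℂ) : Vᵀ = −V} and let h : Skew(m,ℂ) × Skew(m,ℂ) → ℂ be sesquilinear (complex linear in the first variable, conjugate linear in the second) and Hermitian, and suppose h(AVAᵀ, AWAᵀ) = h(V,W) for all V, W ∈ Skew(m,ℂ) and all A ∈ U(m). Then there exists a real constant c such that h(V,W) = c · tr(V W*) for all V, W ∈ Skew(m,ℂ). -/

import Mathlib

/-!
Conjugating by diagonal sign matrices shows that the elementary skew matrices `Eᵢⱼ - Eⱼᵢ` are
`h`-orthogonal unless they are equal up to sign; conjugating by permutation matrices shows that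
they all have the same `h`-length `γ`, which is real because `h` is Hermitian. So `h` agrees with
`(V, W) ↦ (γ / 2) tr (V W*)` on this spanning family, hence on all skew-symmetric matrices.
-/

open Matrix

namespace Matrix

variable {n R : Type*}

lemma transpose_sum_eq_neg [AddCommGroup R] {ι : Type*} {s : Finset ι} {g : ι → Matrix n n R}
    (hg : ∀ i ∈ s, (g i)ᵀ = -g i) : (∑ i ∈ s, g i)ᵀ = -∑ i ∈ s, g i := by
  rw [transpose_sum, ← Finset.sum_neg_distrib]
  exact Finset.sum_congr rfl hg

variable [DecidableEq n]

def skewSingle [Ring R] (i j : n) : Matrix n n R := single i j 1 - single j i 1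

section Ring

variable [Ring R] (i j : n)

lemma skewSingle_apply (x y : n) :
    (skewSingle i j : Matrix n n R) x y =
      (if i = x ∧ j = y then 1 else 0) - (if j = x ∧ i = y then 1 else 0) := by
  simp [skewSingle, single_apply]

@[simp] lemma skewSingle_self : (skewSingle i i : Matrix n n R) = 0 := sub_self _

lemma skewSingle_swap : (skewSingle j i : Matrix n n R) = -skewSingle i j :=
  (neg_sub _ _).symm

@[simp] lemma transpose_skewSingle : (skewSingle i j : Matrix n n R)ᵀ = -skewSingle i j := by
  simp [skewSingle, transpose_single]

@[simp] lemma conjTranspose_skewSingle [StarRing R] :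
    (skewSingle i j : Matrix n n R)ᴴ = skewSingle j i := by
  simp [skewSingle, conjTranspose_single]

lemma submatrix_skewSingle (σ : Equiv.Perm n) :
    (skewSingle i j : Matrix n n R).submatrix σ σ = skewSingle (σ.symm i) (σ.symm j) := by
  ext x y
  simp [skewSingle_apply, Equiv.symm_apply_eq]

variable [Fintype n]

lemma trace_skewSingle_mul (M : Matrix n n R) :
    (skewSingle i j * M).trace = M j i - M i j := by
  simp [skewSingle, sub_mul, trace_single_mul]

lemma trace_skewSingle_mul_conjTranspose [StarRing R] (k l : n) :
    ((skewSingle i j : Matrix n n R) * (skewSingle k l)ᴴ).trace = 2 * skewSingle i j k l := by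
  rw [conjTranspose_skewSingle, trace_skewSingle_mul]
  simp only [skewSingle_apply]
  split_ifs <;> grind

end Ring

variable [CommRing R] [Fintype n]

lemma diagonal_mul_skewSingle_mul_transpose (d : n → R) (i j : n) :
    diagonal d * (skewSingle i j : Matrix n n R) * (diagonal d)ᵀ =
      (d i * d j) • skewSingle i j := by
  ext x y
  simp only [diagonal_transpose, mul_diagonal, diagonal_mul, smul_apply, smul_eq_mul,
    skewSingle_apply]
  split_ifs <;> grind

/-- Stated for `2 • V` so that no division by `2` is needed. -/
lemma two_smul_eq_sum_skewSingle {V : Matrix n n R} (hV : Vᵀ = -V) :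
    (2 : R) • V = ∑ p : n × n, V p.1 p.2 • skewSingle p.1 p.2 := by
  have hVt : ∑ p : n × n, single p.2 p.1 (V p.1 p.2) = -V := by
    rw [← hV, matrix_eq_sum_single Vᵀ, Fintype.sum_prod_type, Finset.sum_comm]
    rfl
  simp only [skewSingle, smul_sub, smul_single, smul_eq_mul, mul_one, Finset.sum_sub_distrib,
    hVt, Fintype.sum_prod_type, ← matrix_eq_sum_single]
  rw [two_smul, sub_neg_eq_add]

lemma permMatrix_mul_mul_transpose (σ : Equiv.Perm n) (M : Matrix n n R) :
    σ.permMatrix R * M * (σ.permMatrix R)ᵀ = M.submatrix σ σ := by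
  rw [transpose_permMatrix, Equiv.Perm.permMatrix, Equiv.Perm.permMatrix,
    PEquiv.toMatrix_toPEquiv_mul, PEquiv.mul_toMatrix_toPEquiv]
  rfl

variable [StarRing R]

lemma diagonal_mem_unitaryGroup {d : n → R} (hd : ∀ i, star (d i) * d i = 1) :
    diagonal d ∈ unitaryGroup n R := by
  rw [mem_unitaryGroup_iff', star_eq_conjTranspose, diagonal_conjTranspose, diagonal_mul_diagonal,
    ← diagonal_one]
  exact congrArg diagonal (funext hd)

lemma permMatrix_mem_unitaryGroup (σ : Equiv.Perm n) : σ.permMatrix R ∈ unitaryGroup n R := by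
  rw [mem_unitaryGroup_iff', star_eq_conjTranspose, conjTranspose_permMatrix, ← permMatrix_mul,
    mul_inv_cancel, permMatrix_one]

end Matrix

variable {n 𝕜 : Type*} [CommRing 𝕜] [StarRing 𝕜]

/-- Only the values of `h` on pairs of skew-symmetric matrices matter. -/
structure IsSesqFormOnSkew (h : Matrix n n 𝕜 → Matrix n n 𝕜 → 𝕜) : Prop where
  add_left : ∀ V V' W : Matrix n n 𝕜, Vᵀ = -V → V'ᵀ = -V' → Wᵀ = -W →
    h (V + V') W = h V W + h V' W
  smul_left : ∀ (a : 𝕜) (V W : Matrix n n 𝕜), Vᵀ = -V → Wᵀ = -W → h (a • V) W = a * h V W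
  add_right : ∀ V W W' : Matrix n n 𝕜, Vᵀ = -V → Wᵀ = -W → W'ᵀ = -W' →
    h V (W + W') = h V W + h V W'
  smul_right : ∀ (a : 𝕜) (V W : Matrix n n 𝕜), Vᵀ = -V → Wᵀ = -W →
    h V (a • W) = starRingEnd 𝕜 a * h V W

def IsUnitaryCongrInvariant [DecidableEq n] [Fintype n] (h : Matrix n n 𝕜 → Matrix n n 𝕜 → 𝕜) :
    Prop :=
  ∀ V W : Matrix n n 𝕜, Vᵀ = -V → Wᵀ = -W →
    ∀ A ∈ unitaryGroup n 𝕜, h (A * V * Aᵀ) (A * W * Aᵀ) = h V W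

lemma isSesqFormOnSkew_const_mul_trace [Fintype n] (c : 𝕜) :
    IsSesqFormOnSkew fun V W : Matrix n n 𝕜 => c * (V * Wᴴ).trace where
  add_left V V' W _ _ _ := by simp [add_mul, mul_add]
  smul_left a V W _ _ := by simp; ring
  add_right V W W' _ _ _ := by simp [mul_add]
  smul_right a V W _ _ := by simp [starRingEnd_apply]; ring

namespace IsSesqFormOnSkew

variable {h : Matrix n n 𝕜 → Matrix n n 𝕜 → 𝕜}

lemma zero_left (hh : IsSesqFormOnSkew h) {W : Matrix n n 𝕜} (hW : Wᵀ = -W) : h 0 W = 0 := by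
  simpa using hh.smul_left 0 0 W (by simp) hW

lemma zero_right (hh : IsSesqFormOnSkew h) {V : Matrix n n 𝕜} (hV : Vᵀ = -V) : h V 0 = 0 := by
  simpa using hh.smul_right 0 V 0 hV (by simp)

lemma neg_right (hh : IsSesqFormOnSkew h) {V W : Matrix n n 𝕜} (hV : Vᵀ = -V) (hW : Wᵀ = -W) :
    h V (-W) = -h V W := by
  simpa using hh.smul_right (-1) V W hV hW

lemma sum_left (hh : IsSesqFormOnSkew h) {ι : Type*} (s : Finset ι) {g : ι → Matrix n n 𝕜}
    (hg : ∀ i, (g i)ᵀ = -g i) {W : Matrix n n 𝕜} (hW : Wᵀ = -W) :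
    h (∑ i ∈ s, g i) W = ∑ i ∈ s, h (g i) W := by
  classical
  induction s using Finset.induction_on with
  | empty => simpa using hh.zero_left hW
  | insert i s hi ih =>
    rw [Finset.sum_insert hi, Finset.sum_insert hi,
      hh.add_left _ _ _ (hg i) (transpose_sum_eq_neg fun j _ => hg j) hW, ih]

lemma sum_right (hh : IsSesqFormOnSkew h) {ι : Type*} (s : Finset ι) {g : ι → Matrix n n 𝕜}
    (hg : ∀ i, (g i)ᵀ = -g i) {V : Matrix n n 𝕜} (hV : Vᵀ = -V) :
    h V (∑ i ∈ s, g i) = ∑ i ∈ s, h V (g i) := by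
  classical
  induction s using Finset.induction_on with
  | empty => simpa using hh.zero_right hV
  | insert i s hi ih =>
    rw [Finset.sum_insert hi, Finset.sum_insert hi,
      hh.add_right _ _ _ hV (hg i) (transpose_sum_eq_neg fun j _ => hg j), ih]

variable [DecidableEq n] [Fintype n]

lemma four_mul_apply_eq_sum (hh : IsSesqFormOnSkew h) {V W : Matrix n n 𝕜} (hV : Vᵀ = -V)
    (hW : Wᵀ = -W) :
    4 * h V W = ∑ p : n × n, ∑ q : n × n,
      V p.1 p.2 * (starRingEnd 𝕜 (W q.1 q.2) * h (skewSingle p.1 p.2) (skewSingle q.1 q.2)) := by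
  calc 4 * h V W = h ((2 : 𝕜) • V) ((2 : 𝕜) • W) := by
        rw [hh.smul_left _ _ _ hV (by simp [hW]), hh.smul_right _ _ _ hV hW, map_ofNat]
        ring
    _ = _ := by
      rw [two_smul_eq_sum_skewSingle hV, two_smul_eq_sum_skewSingle hW,
        hh.sum_left _ (fun p => by simp) (transpose_sum_eq_neg fun q _ => by simp)]
      refine Finset.sum_congr rfl fun p _ => ?_
      rw [hh.smul_left _ _ _ (by simp) (transpose_sum_eq_neg fun q _ => by simp),
        hh.sum_right _ (fun q => by simp) (by simp), Finset.mul_sum]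
      refine Finset.sum_congr rfl fun q _ => ?_
      rw [hh.smul_right _ _ _ (by simp) (by simp)]

lemma eq_of_apply_skewSingle [IsDomain 𝕜] [CharZero 𝕜] {h' : Matrix n n 𝕜 → Matrix n n 𝕜 → 𝕜}
    (hh : IsSesqFormOnSkew h) (hh' : IsSesqFormOnSkew h')
    (heq : ∀ i j k l : n,
      h (skewSingle i j) (skewSingle k l) = h' (skewSingle i j) (skewSingle k l))
    {V W : Matrix n n 𝕜} (hV : Vᵀ = -V) (hW : Wᵀ = -W) : h V W = h' V W := by
  have h4 : 4 * h V W = 4 * h' V W := by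
    simp only [hh.four_mul_apply_eq_sum hV hW, hh'.four_mul_apply_eq_sum hV hW, heq]
  exact mul_left_cancel₀ (by norm_num) h4

end IsSesqFormOnSkew

variable [DecidableEq n] [Fintype n] {h : Matrix n n 𝕜 → Matrix n n 𝕜 → 𝕜}

lemma IsUnitaryCongrInvariant.apply_skewSingle_perm (hinv : IsUnitaryCongrInvariant h)
    (σ : Equiv.Perm n) (i j k l : n) :
    h (skewSingle (σ i) (σ j)) (skewSingle (σ k) (σ l)) = h (skewSingle i j) (skewSingle k l) := by
  have := hinv _ _ (transpose_skewSingle i j) (transpose_skewSingle k l) _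
    (permMatrix_mem_unitaryGroup σ⁻¹)
  rwa [permMatrix_mul_mul_transpose, permMatrix_mul_mul_transpose, submatrix_skewSingle,
    submatrix_skewSingle, Equiv.Perm.inv_def, Equiv.symm_symm] at this

lemma IsUnitaryCongrInvariant.apply_skewSingle_self (hinv : IsUnitaryCongrInvariant h)
    {i j a b : n} (hij : i ≠ j) (hab : a ≠ b) :
    h (skewSingle i j) (skewSingle i j) = h (skewSingle a b) (skewSingle a b) := by
  obtain ⟨σ, hσ⟩ := Equiv.Perm.exists_extending_pair ![a, b] ![i, j]
    (by simp [Function.Injective, Fin.forall_fin_two, hab, hab.symm])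
    (by simp [Function.Injective, Fin.forall_fin_two, hij, hij.symm])
  have hσa : σ a = i := hσ 0
  have hσb : σ b = j := hσ 1
  rw [← hσa, ← hσb, hinv.apply_skewSingle_perm]

variable [IsDomain 𝕜] [CharZero 𝕜]

lemma IsSesqFormOnSkew.apply_skewSingle_eq_zero (hh : IsSesqFormOnSkew h)
    (hinv : IsUnitaryCongrInvariant h) {i j k l x : n} (hij : i ≠ j) (hx : x = i ∨ x = j)
    (hk : k ≠ x) (hl : l ≠ x) : h (skewSingle i j) (skewSingle k l) = 0 := by
  set d : n → 𝕜 := fun t => if t = x then -1 else 1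
  have hd : ∀ t, star (d t) * d t = 1 := fun t => by by_cases ht : t = x <;> simp [d, ht]
  have hdij : d i * d j = -1 := by rcases hx with rfl | rfl <;> simp [d, hij, hij.symm]
  have hdkl : d k * d l = 1 := by simp [d, hk, hl]
  have := hinv _ _ (transpose_skewSingle i j) (transpose_skewSingle k l) _
    (diagonal_mem_unitaryGroup hd)
  rw [diagonal_mul_skewSingle_mul_transpose, diagonal_mul_skewSingle_mul_transpose, hdij, hdkl,
    one_smul, hh.smul_left _ _ _ (transpose_skewSingle i j) (transpose_skewSingle k l),
    neg_one_mul] at this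
  exact CharZero.neg_eq_self_iff.mp this

lemma IsSesqFormOnSkew.apply_skewSingle_skewSingle (hh : IsSesqFormOnSkew h)
    (hinv : IsUnitaryCongrInvariant h) {a b : n} (hab : a ≠ b) (i j k l : n) :
    h (skewSingle i j) (skewSingle k l) =
      h (skewSingle a b) (skewSingle a b) * skewSingle i j k l := by
  by_cases hij : i = j
  · subst hij
    simp [hh.zero_left (transpose_skewSingle k l)]
  by_cases hkl : k = i ∧ l = j
  · obtain ⟨rfl, rfl⟩ := hkl
    simp [hinv.apply_skewSingle_self hij hab, skewSingle_apply, hij]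
  by_cases hlk : k = j ∧ l = i
  · obtain ⟨rfl, rfl⟩ := hlk
    rw [skewSingle_swap l k, hh.neg_right (transpose_skewSingle _ _) (transpose_skewSingle _ _),
      hinv.apply_skewSingle_self hij hab]
    simp [skewSingle_apply, hij]
  have hzero : (skewSingle i j : Matrix n n 𝕜) k l = 0 := by
    simp only [skewSingle_apply]
    grind
  rw [hzero, mul_zero]
  by_cases hi : k = i ∨ l = i
  · exact hh.apply_skewSingle_eq_zero hinv hij (Or.inr rfl) (by grind) (by grind)
  · exact hh.apply_skewSingle_eq_zero hinv hij (Or.inl rfl) (by grind) (by grind)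

/-- every `U(m)`-invariant (under `V ↦ A V Aᵀ`) Hermitian sesquilinear form on
the skew-symmetric complex matrices (`m ≥ 2`) is a real constant multiple of
`(V,W) ↦ tr(V W*)`. -/
theorem invariant_hermitian_form_typeIII (m : ℕ) (hm : 2 ≤ m)
    (h : Matrix (Fin m) (Fin m) ℂ → Matrix (Fin m) (Fin m) ℂ → ℂ)
    (hadd₁ : ∀ V V' W : Matrix (Fin m) (Fin m) ℂ, Vᵀ = -V → V'ᵀ = -V' → Wᵀ = -W →
      h (V + V') W = h V W + h V' W)
    (hsmul₁ : ∀ (a : ℂ) (V W : Matrix (Fin m) (Fin m) ℂ), Vᵀ = -V → Wᵀ = -W →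
      h (a • V) W = a * h V W)
    (hadd₂ : ∀ V W W' : Matrix (Fin m) (Fin m) ℂ, Vᵀ = -V → Wᵀ = -W → W'ᵀ = -W' →
      h V (W + W') = h V W + h V W')
    (hsmul₂ : ∀ (a : ℂ) (V W : Matrix (Fin m) (Fin m) ℂ), Vᵀ = -V → Wᵀ = -W →
      h V (a • W) = starRingEnd ℂ a * h V W)
    (hherm : ∀ V W : Matrix (Fin m) (Fin m) ℂ, Vᵀ = -V → Wᵀ = -W →
      h W V = starRingEnd ℂ (h V W))
    (hinv : ∀ V W : Matrix (Fin m) (Fin m) ℂ, Vᵀ = -V → Wᵀ = -W →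
      ∀ A ∈ Matrix.unitaryGroup (Fin m) ℂ, h (A * V * Aᵀ) (A * W * Aᵀ) = h V W) :
    ∃ c : ℝ, ∀ V W : Matrix (Fin m) (Fin m) ℂ, Vᵀ = -V → Wᵀ = -W →
      h V W = (c : ℂ) * (V * Wᴴ).trace := by
  obtain ⟨a, b, hab⟩ := Fintype.exists_pair_of_one_lt_card (α := Fin m)
    (by rw [Fintype.card_fin]; omega)
  have hh : IsSesqFormOnSkew h := ⟨hadd₁, hsmul₁, hadd₂, hsmul₂⟩
  set γ := h (skewSingle a b) (skewSingle a b)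
  have hγ : ((γ.re : ℝ) : ℂ) = γ := Complex.conj_eq_iff_re.mp
    (hherm _ _ (transpose_skewSingle a b) (transpose_skewSingle a b)).symm
  refine ⟨γ.re / 2, fun V W hV hW => hh.eq_of_apply_skewSingle
    (isSesqFormOnSkew_const_mul_trace _) (fun i j k l => ?_) hV hW⟩
  rw [hh.apply_skewSingle_skewSingle hinv hab, trace_skewSingle_mul_conjTranspose]
  push_cast
  rw [hγ]
  ring
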